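/- arXiv:2408.08598 — 3 statements merged into one kernel-verified Lean document; each statement's English description precedes it below -/
import Mathlib

section
/- For every positive integer k, b_2(K_{3^k − 1}) = (3^k − 1)/2. -/
open Finset

/-- The number of bicliques in the collection `f` that cover the pair `(u, v)`. -/
noncomputable def coversCount {V : Type*} {m : ℕ} (f : Fin m → Finset V × Finset V) (u v : V) : ℕ :=
  Nat.card {i : Fin m // (u ∈ (f i).1 ∧ v ∈ (f i).2) ∨ (u ∈ (f i).2 ∧ v ∈ (f i).1)}

/-- `f` is an odd cover of `G`: a collection of bicliques (pairs of disjoint finite sets of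
vertices) covering each edge of `G` an odd number of times and each nonedge an even number
of times. -/
def IsOddCover {V : Type*} (G : SimpleGraph V) {m : ℕ}
    (f : Fin m → Finset V × Finset V) : Prop :=
  (∀ i, Disjoint (f i).1 (f i).2) ∧
  ∀ u v : V, u ≠ v → (G.Adj u v ↔ Odd (coversCount f u v))

/-- `b2 G` is the minimum cardinality of an odd cover of `G`. -/
noncomputable def b2 {V : Type*} (G : SimpleGraph V) : ℕ :=
  sInf {m : ℕ | ∃ f : Fin m → Finset V × Finset V, IsOddCover G f}

/-- `r2 G` is the rank over `𝔽₂` of the adjacency matrix of `G`. -/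
noncomputable def r2 {V : Type*} [Fintype V] (G : SimpleGraph V) : ℕ :=
  letI := Classical.decRel G.Adj
  (SimpleGraph.adjMatrix (ZMod 2) G).rank

/-- Disjoint union of an indexed family of graphs, on the sigma type of the vertex types. -/
def sigmaSum {ι : Type*} {α : ι → Type*} (G : (i : ι) → SimpleGraph (α i)) :
    SimpleGraph ((i : ι) × α i) where
  Adj x y := ∃ (i : ι) (a b : α i), (G i).Adj a b ∧ x = ⟨i, a⟩ ∧ y = ⟨i, b⟩
  symm := ⟨by rintro x y ⟨i, a, b, h, rfl, rfl⟩; exact ⟨i, b, a, h.symm, rfl, rfl⟩⟩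
  loopless := ⟨by
    rintro x ⟨i, a, b, h, rfl, h2⟩
    obtain ⟨-, h3⟩ := Sigma.mk.inj_iff.mp h2
    exact (G i).loopless.irrefl a (by cases h3; exact h)⟩

/-!
Lower bound: an odd cover of `G` by bicliques `(Xᵢ, Yᵢ)`, `i < m`, writes the adjacency matrix of
`G` over `𝔽₂` as `∑ᵢ (xᵢ yᵢᵀ + yᵢ xᵢᵀ)` (`xᵢ`, `yᵢ` the indicator vectors), a product through a
`2m`-dimensional space. For `Kₙ` with `n` even this matrix is `J + I`, which is its own inverse
because `J² = nJ = 0`; hence `n ≤ 2m`.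

Upper bound: take the nonzero vectors of `𝔽₃ᵏ` as vertices and, for each of the `(3ᵏ - 1)/2`
pairs `±t`, the biclique `({x | x ⬝ t = 1}, {x | x ⬝ t = 2})`. It covers `u ≠ v` iff
`{u ⬝ t, v ⬝ t} = {1, 2}`, and each covering pair `±t` contains exactly one `t` with
`(u ⬝ t, v ⬝ t) = (1, 2)`. These `t` form a nonempty fibre of a homomorphism on `𝔽₃ᵏ`, whose size
divides `3ᵏ` and is therefore odd.
-/

open Matrix

theorem AddMonoidHom.odd_card_fiber {G H : Type*} [AddGroup G] [Fintype G] [AddMonoid H]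
    [DecidableEq H] (hG : Odd (Fintype.card G)) (f : G →+ H) {y : H} (hy : y ∈ Set.range f) :
    Odd #{g | f g = y} := by
  rw [AddMonoidHom.card_fiber_eq_of_mem_range f hy ⟨0, rfl⟩, map_zero]
  refine Odd.of_dvd_nat hG ?_
  simpa [Nat.card_eq_fintype_card, Fintype.card_subtype] using
    AddSubgroup.card_addSubgroup_dvd_card f.ker

theorem card_eq_two_mul_card_filter_lt {α β : Type*} [LinearOrder β] {σ : α → α} {e : α → β}
    (hσ : Function.Involutive σ) (he : Function.Injective e) {s : Finset α}
    (hs : ∀ a ∈ s, σ a ∈ s) (hfix : ∀ a ∈ s, σ a ≠ a) :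
    #s = 2 * #{a ∈ s | e a < e (σ a)} := by
  have hswap : #{a ∈ s | ¬e a < e (σ a)} = #{a ∈ s | e a < e (σ a)} := by
    refine Finset.card_bij' (fun a _ => σ a) (fun a _ => σ a) (fun a ha => ?_) (fun a ha => ?_)
      (fun a _ => hσ a) (fun a _ => hσ a)
    · rw [Finset.mem_filter] at ha ⊢
      refine ⟨hs a ha.1, ?_⟩
      rw [hσ a]
      exact lt_of_le_of_ne (not_lt.mp ha.2) (he.ne (hfix a ha.1))
    · rw [Finset.mem_filter] at ha ⊢
      refine ⟨hs a ha.1, ?_⟩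
      rw [hσ a]
      exact not_lt.mpr ha.2.le
  have := Finset.card_filter_add_card_filter_not (s := s) (fun a => e a < e (σ a))
  omega

theorem Matrix.exists_dotProduct_eq {K n : Type*} [Field K] [Fintype n] [DecidableEq n]
    {w : n → K} (hw : w ≠ 0) (a : K) : ∃ t, w ⬝ᵥ t = a := by
  obtain ⟨j, hj⟩ := Function.ne_iff.mp hw
  exact ⟨Pi.single j ((w j)⁻¹ * a),
    by rw [dotProduct_single, ← mul_assoc, mul_inv_cancel₀ hj, one_mul]⟩

theorem Finset.natCard_subtype_eq_card_filter {α : Type*} (s : Finset α) (P : α → Prop)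
    [DecidablePred P] : Nat.card {t : s // P t} = #{t ∈ s | P t} := by
  rw [← Nat.card_eq_finsetCard, Nat.card_congr
    ((Equiv.subtypeSubtypeEquivSubtypeInter (· ∈ s) P).trans
      (Equiv.subtypeEquivRight fun t => (Finset.mem_filter (s := s) (p := P)).symm))]

theorem coversCount_eq_card_filter {V : Type*} [DecidableEq V] {m : ℕ}
    (f : Fin m → Finset V × Finset V) (u v : V) :
    coversCount f u v =
      #{i | (u ∈ (f i).1 ∧ v ∈ (f i).2) ∨ (u ∈ (f i).2 ∧ v ∈ (f i).1)} := by
  rw [coversCount, Nat.card_eq_fintype_card, Fintype.card_subtype]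

theorem r2_eq_rank {V : Type*} [Fintype V] (G : SimpleGraph V) [DecidableRel G.Adj] :
    r2 G = (G.adjMatrix (ZMod 2)).rank := by
  unfold r2
  congr

section LowerBound

variable {V : Type*} [DecidableEq V] {m : ℕ}

def incidenceMatrix (f : Fin m → Finset V × Finset V) : Matrix V (Fin m ⊕ Fin m) (ZMod 2) :=
  of fun v => Sum.elim (fun i => if v ∈ (f i).1 then 1 else 0) fun i => if v ∈ (f i).2 then 1 else 0

theorem incidenceMatrix_mul_apply {f : Fin m → Finset V × Finset V}
    (hf : ∀ i, Disjoint (f i).1 (f i).2) (u w : V) :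
    (incidenceMatrix f * ((incidenceMatrix f).submatrix id Sum.swap)ᵀ) u w = coversCount f u w := by
  rw [coversCount_eq_card_filter, Finset.card_filter, Nat.cast_sum, mul_apply, Fintype.sum_sum_type,
    ← Finset.sum_add_distrib]
  refine Finset.sum_congr rfl fun i _ => ?_
  have := Finset.disjoint_left.mp (hf i)
  by_cases a : u ∈ (f i).1 <;> by_cases b : w ∈ (f i).1 <;> by_cases c : u ∈ (f i).2 <;>
    by_cases d : w ∈ (f i).2 <;> simp_all [incidenceMatrix]

theorem IsOddCover.adjMatrix_eq_mul {G : SimpleGraph V} [DecidableRel G.Adj]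
    {f : Fin m → Finset V × Finset V} (hf : IsOddCover G f) :
    G.adjMatrix (ZMod 2) = incidenceMatrix f * ((incidenceMatrix f).submatrix id Sum.swap)ᵀ := by
  ext u w
  rw [incidenceMatrix_mul_apply hf.1, SimpleGraph.adjMatrix_apply]
  obtain rfl | huw := eq_or_ne u w
  · have hzero : coversCount f u u = 0 := by
      rw [coversCount_eq_card_filter, Finset.card_eq_zero, Finset.filter_eq_empty_iff]
      intro i _ h
      have := Finset.disjoint_left.mp (hf.1 i)
      tauto
    simp [hzero]
  · split_ifs with h
    · exact ((ZMod.natCast_eq_one_iff_odd).2 ((hf.2 u w huw).1 h)).symm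
    · rw [eq_comm, ZMod.natCast_eq_zero_iff_even, ← Nat.not_odd_iff_even, ← hf.2 u w huw]
      exact h

theorem r2_le_two_mul_of_isOddCover [Fintype V] {G : SimpleGraph V}
    {f : Fin m → Finset V × Finset V} (hf : IsOddCover G f) : r2 G ≤ 2 * m := by
  classical
  rw [r2_eq_rank, hf.adjMatrix_eq_mul]
  calc _ ≤ (incidenceMatrix f).rank := rank_mul_le_left _ _
    _ ≤ Fintype.card (Fin m ⊕ Fin m) := rank_le_card_width _
    _ = 2 * m := by simp [two_mul]

theorem r2_top [Fintype V] (hV : Even (Fintype.card V)) :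
    r2 (⊤ : SimpleGraph V) = Fintype.card V := by
  set J : Matrix V V (ZMod 2) := vecMulVec 1 1
  have hA : (⊤ : SimpleGraph V).adjMatrix (ZMod 2) = J + 1 := by
    ext u w
    obtain rfl | h := eq_or_ne u w <;> simp [J, one_apply, *]
    decide
  have hJJ : J * J = 0 := by
    rw [vecMulVec_mul_vecMulVec]
    simp [dotProduct, ZMod.natCast_eq_zero_iff_even.mpr hV]
  have hJ2 : J + J = 0 := by
    ext
    simp [J]
    decide
  have hinv : (J + 1) * (J + 1) = 1 := by
    rw [add_mul, mul_add, mul_add, hJJ, mul_one, one_mul, one_mul, zero_add, ← add_assoc, hJ2,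
      zero_add]
  rw [r2_eq_rank, hA]
  exact rank_of_isUnit _ (.of_mul_eq_one _ hinv)

end LowerBound

section Ternary

variable {k : ℕ}

theorem neg_ne_self_of_ne_zero {t : Fin k → ZMod 3} (ht : t ≠ 0) : -t ≠ t := by
  have key : ∀ a : ZMod 3, -a = a → a = 0 := by decide
  exact fun h => ht (funext fun j => key _ (congrFun h j))

/-- One vector out of each pair `±t`, chosen by an arbitrary enumeration; `0` is excluded. -/
noncomputable def signReps (k : ℕ) : Finset (Fin k → ZMod 3) :=
  {t | Fintype.equivFin _ t < Fintype.equivFin _ (-t)}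

theorem two_mul_card_filter_signReps {P : (Fin k → ZMod 3) → Prop} [DecidablePred P]
    (hneg : ∀ t, P t → P (-t)) (h0 : ¬P 0) :
    2 * #{t ∈ signReps k | P t} = #{t | P t} := by
  rw [card_eq_two_mul_card_filter_lt neg_involutive (Fintype.equivFin _).injective
    (s := {t | P t}), signReps, Finset.filter_filter, Finset.filter_filter]
  · simp_rw [and_comm]
  · simpa using hneg
  · intro t ht
    simp only [Finset.mem_filter, Finset.mem_univ, true_and] at ht
    exact neg_ne_self_of_ne_zero (by rintro rfl; exact h0 ht)

theorem card_filter_ne_zero : #{t : Fin k → ZMod 3 | t ≠ 0} = 3 ^ k - 1 := by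
  rw [Finset.filter_ne', Finset.card_erase_of_mem (Finset.mem_univ _), Finset.card_univ,
    Fintype.card_fun, ZMod.card, Fintype.card_fin]

theorem two_mul_card_signReps : 2 * #(signReps k) = 3 ^ k - 1 := by
  have hsign : {t ∈ signReps k | t ≠ 0} = signReps k :=
    Finset.filter_true_of_mem fun t ht h0 => by simp [signReps, h0] at ht
  rw [← hsign, ← card_filter_ne_zero]
  exact two_mul_card_filter_signReps (fun t => neg_ne_zero.mpr) (by simp)

theorem exists_dotProduct_eq_one_and_eq_two {u v : Fin k → ZMod 3} (hu : u ≠ 0) (hv : v ≠ 0)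
    (huv : u ≠ v) : ∃ t, u ⬝ᵥ t = 1 ∧ v ⬝ᵥ t = 2 := by
  obtain ⟨t₁, ht₁⟩ := exists_dotProduct_eq hu 1
  -- `s + (1 - u ⬝ᵥ s) • t₁` has `u`-value `1` for every `s`
  have correct : ∀ s, v ⬝ᵥ s + (1 - u ⬝ᵥ s) * v ⬝ᵥ t₁ = 2 → ∃ t, u ⬝ᵥ t = 1 ∧ v ⬝ᵥ t = 2 :=
    fun s hs => ⟨s + (1 - u ⬝ᵥ s) • t₁, by simp [dotProduct_add, ht₁], by simpa [dotProduct_add]⟩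
  have hval : ∀ a : ZMod 3, a = 0 ∨ a = 1 ∨ a = 2 := by decide
  rcases hval (v ⬝ᵥ t₁) with h | h | h
  · obtain ⟨s, hs⟩ := exists_dotProduct_eq hv 2
    exact correct s (by simp [h, hs])
  · obtain ⟨s, hs⟩ := exists_dotProduct_eq (sub_ne_zero.mpr huv.symm) 1
    refine correct s ?_
    rw [sub_dotProduct] at hs
    linear_combination hs + (1 - u ⬝ᵥ s) * h
  · exact ⟨t₁, ht₁, h⟩

theorem odd_card_filter_signReps {u v : Fin k → ZMod 3} (hu : u ≠ 0) (hv : v ≠ 0) (huv : u ≠ v) :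
    Odd #{t ∈ signReps k | (u ⬝ᵥ t = 1 ∧ v ⬝ᵥ t = 2) ∨ (u ⬝ᵥ t = 2 ∧ v ⬝ᵥ t = 1)} := by
  let φ : (Fin k → ZMod 3) →+ ZMod 3 × ZMod 3 :=
    AddMonoidHom.mk' (fun t => (u ⬝ᵥ t, v ⬝ᵥ t)) fun a b => by simp [dotProduct_add]
  obtain ⟨t₀, h₁, h₂⟩ := exists_dotProduct_eq_one_and_eq_two hu hv huv
  have hodd : Odd #{t | φ t = (1, 2)} :=
    φ.odd_card_fiber (by simpa [ZMod.card] using Odd.pow (by decide)) ⟨t₀, by simp [φ, h₁, h₂]⟩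
  have hswap : #{t | φ t = (2, 1)} = #{t | φ t = (1, 2)} :=
    AddMonoidHom.card_fiber_eq_of_mem_range φ ⟨-t₀, by simp [φ, h₁, h₂]; decide⟩
      ⟨t₀, by simp [φ, h₁, h₂]⟩
  have hsplit : #{t | (u ⬝ᵥ t = 1 ∧ v ⬝ᵥ t = 2) ∨ (u ⬝ᵥ t = 2 ∧ v ⬝ᵥ t = 1)}
      = #{t | φ t = (1, 2)} + #{t | φ t = (2, 1)} := by
    rw [← Finset.card_union_of_disjoint, ← Finset.filter_or]
    · simp [φ]
    · exact Finset.disjoint_filter.mpr fun t _ h h' => absurd (h.symm.trans h') (by decide)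
  have hhalf := two_mul_card_filter_signReps
    (P := fun t => (u ⬝ᵥ t = 1 ∧ v ⬝ᵥ t = 2) ∨ (u ⬝ᵥ t = 2 ∧ v ⬝ᵥ t = 1))
    (fun t ht => by rcases ht with h | h <;> simp [h] <;> decide) (by simp)
  have hcard : #{t ∈ signReps k | (u ⬝ᵥ t = 1 ∧ v ⬝ᵥ t = 2) ∨ (u ⬝ᵥ t = 2 ∧ v ⬝ᵥ t = 1)}
      = #{t | φ t = (1, 2)} := by
    omega
  rwa [hcard]

def dotBiclique {α : Type*} [Fintype α] (ι : α → Fin k → ZMod 3) (t : Fin k → ZMod 3) :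
    Finset α × Finset α :=
  (({a | ι a ⬝ᵥ t = 1} : Finset α), ({a | ι a ⬝ᵥ t = 2} : Finset α))

theorem isOddCover_top_dotBiclique {α : Type*} [Fintype α] {ι : α → Fin k → ZMod 3}
    (hι : Function.Injective ι) (h0 : ∀ a, ι a ≠ 0) {m : ℕ} (e : Fin m ≃ signReps k) :
    IsOddCover (⊤ : SimpleGraph α) fun i => dotBiclique ι (e i) := by
  refine ⟨fun i => Finset.disjoint_filter.mpr fun a _ h h' => absurd (h.symm.trans h') (by decide),
    fun u v huv => ?_⟩
  have hcount : coversCount (fun i => dotBiclique ι (e i)) u v =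
      #{t ∈ signReps k | (ι u ⬝ᵥ t = 1 ∧ ι v ⬝ᵥ t = 2) ∨ (ι u ⬝ᵥ t = 2 ∧ ι v ⬝ᵥ t = 1)} := by
    rw [← Finset.natCard_subtype_eq_card_filter]
    exact Nat.card_congr (e.subtypeEquiv fun _ => by simp [dotBiclique])
  rw [SimpleGraph.top_adj, iff_true_intro huv, true_iff, hcount]
  exact odd_card_filter_signReps (h0 u) (h0 v) (hι.ne huv)

theorem exists_isOddCover_top (k : ℕ) :
    ∃ f : Fin ((3 ^ k - 1) / 2) → Finset (Fin (3 ^ k - 1)) × Finset (Fin (3 ^ k - 1)),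
      IsOddCover ⊤ f := by
  have hV : Fintype.card {t : Fin k → ZMod 3 // t ≠ 0} = 3 ^ k - 1 := by
    rw [Fintype.card_subtype, card_filter_ne_zero]
  have hT : Fintype.card (signReps k) = (3 ^ k - 1) / 2 := by
    rw [Fintype.card_coe, ← two_mul_card_signReps (k := k), Nat.mul_div_cancel_left _ two_pos]
  let ι := Subtype.val ∘ (Fintype.equivFinOfCardEq hV).symm
  exact ⟨_, isOddCover_top_dotBiclique (ι := ι) (Subtype.val_injective.comp (Equiv.injective _))
    (fun a => ((Fintype.equivFinOfCardEq hV).symm a).2) (Fintype.equivFinOfCardEq hT).symm⟩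

end Ternary

theorem stmt13_general (k : ℕ) :
    b2 (⊤ : SimpleGraph (Fin (3 ^ k - 1))) = (3 ^ k - 1) / 2 := by
  have heven : Even (3 ^ k - 1) := Nat.Odd.sub_odd (Odd.pow (by decide : Odd 3)) odd_one
  obtain ⟨f, hf⟩ := exists_isOddCover_top k
  refine le_antisymm (Nat.sInf_le ⟨f, hf⟩) (le_csInf ⟨_, f, hf⟩ ?_)
  rintro m ⟨g, hg⟩
  have := r2_le_two_mul_of_isOddCover hg
  rw [r2_top (by simpa using heven), Fintype.card_fin] at this
  omega

/-- For every positive integer `k`, `b₂(K_{3^k − 1}) = (3^k − 1) / 2`. -/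
theorem stmt13 (k : ℕ) (hk : 1 ≤ k) :
    b2 (⊤ : SimpleGraph (Fin (3 ^ k - 1))) = (3 ^ k - 1) / 2 :=
  stmt13_general k
end

section
/- Let k ≥ 1 and let {(X_1, Y_1), …, (X_k, Y_k)} be the partite-set pairs of k bicliques forming a perfect odd cover of the complete graph K_{2k}, and set U_i = X_i ∪ Y_i for 1 ≤ i ≤ k. Then every vertex of K_{2k} is contained in an odd number of the sets U_1, …, U_k. -/
open Finset

/-!
Work over `𝔽₂`. Let `M = [X | Y]` and `N = [Y | X]`, where the `i`-th columns of `X` and `Y` are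
the indicator vectors of `Xᵢ` and `Yᵢ`. The odd cover condition says `A = M Nᵀ`, where
`A = J + I` is the adjacency matrix of `K_{2k}`. As `2k` is even, `A² = I`, and since `M` and `N`
are square this forces `(Nᵀ M)² = Nᵀ A M = I`. Its diagonal entry at `i` is
`yᵢᵀ A xᵢ = |Yᵢ| |Xᵢ| - |Xᵢ ∩ Yᵢ| = |Xᵢ| |Yᵢ|`, so all partite sets have odd size, i.e. `Nᵀ 𝟙 = 𝟙`.
Hence `M 𝟙 = M Nᵀ 𝟙 = A 𝟙 = 𝟙`, and the `v`-th entry of `M 𝟙` counts the `Uᵢ` containing `v`.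
-/

open Matrix

namespace Matrix

variable {m n R : Type*} [Fintype m] [Fintype n] [DecidableEq m] [DecidableEq n] [Semiring R]
  [IsStablyFiniteRing R]

theorem mul_mul_mul_eq_one_of_equiv (e : m ≃ n) {A : Matrix m n R} {B : Matrix n m R}
    (h : A * B * (A * B) = 1) : B * A * (B * A) = 1 := by
  have : A * (B * A * B) = 1 := by simpa only [Matrix.mul_assoc] using h
  simpa only [Matrix.mul_assoc] using (mul_eq_one_comm_of_equiv e).1 this

end Matrix

namespace SimpleGraph

variable {V R : Type*} [Fintype V] [DecidableEq V]

theorem adjMatrix_top_mulVec_apply [Ring R] (b : V → R) (u : V) :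
    ((⊤ : SimpleGraph V).adjMatrix R *ᵥ b) u = ∑ v, b v - b u := by
  rw [adjMatrix_mulVec_apply, neighborFinset_top, eq_sub_iff_add_eq,
    ← Fintype.sum_eq_sum_compl_add]

theorem dotProduct_adjMatrix_top_mulVec [CommRing R] (a b : V → R) :
    a ⬝ᵥ ((⊤ : SimpleGraph V).adjMatrix R *ᵥ b) = (∑ v, a v) * ∑ v, b v - a ⬝ᵥ b := by
  simp only [dotProduct, adjMatrix_top_mulVec_apply, mul_sub, Finset.sum_sub_distrib,
    Finset.sum_mul]

theorem adjMatrix_top_mulVec_one_of_even (h : Even (Fintype.card V)) :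
    (⊤ : SimpleGraph V).adjMatrix (ZMod 2) *ᵥ 1 = 1 := by
  ext u
  rw [adjMatrix_top_mulVec_apply]
  simp [(ZMod.natCast_eq_zero_iff_even).2 h]

theorem adjMatrix_top_mul_self_of_even (h : Even (Fintype.card V)) :
    (⊤ : SimpleGraph V).adjMatrix (ZMod 2) * (⊤ : SimpleGraph V).adjMatrix (ZMod 2) = 1 := by
  refine ext_iff_mulVec.2 fun b => funext fun u => ?_
  simp only [← mulVec_mulVec, one_mulVec, adjMatrix_top_mulVec_apply, Finset.sum_sub_distrib,
    Finset.sum_const, Finset.card_univ, nsmul_eq_mul, (ZMod.natCast_eq_zero_iff_even).2 h]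
  have two : (2 : ZMod 2) = 0 := rfl
  linear_combination -(∑ v, b v) * two

end SimpleGraph

section OddCover

variable {V ι : Type*} [DecidableEq V]

def indicatorMatrix (s : ι → Finset V) : Matrix V ι (ZMod 2) :=
  of fun v i => if v ∈ s i then 1 else 0

def bicliqueMatrix (f : ι → Finset V × Finset V) : Matrix V (ι ⊕ ι) (ZMod 2) :=
  fromCols (indicatorMatrix fun i => (f i).1) (indicatorMatrix fun i => (f i).2)

theorem sum_indicatorMatrix_col [Fintype V] (s : ι → Finset V) (i : ι) :
    ∑ v, indicatorMatrix s v i = #(s i) := by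
  simp [indicatorMatrix]

theorem dotProduct_indicatorMatrix_col [Fintype V] (s t : ι → Finset V) (i j : ι) :
    (fun v => indicatorMatrix s v i) ⬝ᵥ (fun v => indicatorMatrix t v j) = #(s i ∩ t j) := by
  rw [Finset.inter_comm]
  simp [indicatorMatrix, dotProduct]

theorem sum_indicatorMatrix_row [Fintype ι] (s : ι → Finset V) (v : V) :
    ∑ i, indicatorMatrix s v i = #{i | v ∈ s i} := by
  simp [indicatorMatrix, Finset.sum_boole]

theorem sum_bicliqueMatrix_col_inl [Fintype V] (f : ι → Finset V × Finset V) (i : ι) :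
    ∑ v, bicliqueMatrix f v (.inl i) = #(f i).1 := by
  simp only [bicliqueMatrix, fromCols_apply_inl, sum_indicatorMatrix_col]

theorem sum_bicliqueMatrix_col_inr [Fintype V] (f : ι → Finset V × Finset V) (i : ι) :
    ∑ v, bicliqueMatrix f v (.inr i) = #(f i).2 := by
  simp only [bicliqueMatrix, fromCols_apply_inr, sum_indicatorMatrix_col]

theorem sum_bicliqueMatrix_row [Fintype ι] [DecidableEq ι] {f : ι → Finset V × Finset V}
    (hd : ∀ i, Disjoint (f i).1 (f i).2) (v : V) :
    ∑ p, bicliqueMatrix f v p = #{i | v ∈ (f i).1 ∪ (f i).2} := by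
  simp only [Fintype.sum_sum_type, bicliqueMatrix, fromCols_apply_inl, fromCols_apply_inr,
    sum_indicatorMatrix_row, Finset.mem_union]
  rw [Finset.filter_or, Finset.card_union_of_disjoint, Nat.cast_add]
  exact Finset.disjoint_filter.2 fun i _ h h' => Finset.disjoint_left.1 (hd i) h h'

theorem coversCount_eq_add {m : ℕ} {f : Fin m → Finset V × Finset V}
    (hd : ∀ i, Disjoint (f i).1 (f i).2) (u w : V) :
    coversCount f u w = #{i | u ∈ (f i).1 ∧ w ∈ (f i).2} + #{i | u ∈ (f i).2 ∧ w ∈ (f i).1} := by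
  rw [coversCount, Nat.card_eq_fintype_card, Fintype.card_subtype, Finset.filter_or,
    Finset.card_union_of_disjoint]
  refine Finset.disjoint_filter.2 fun i _ h h' => Finset.disjoint_left.1 (hd i) h.1 h'.1

theorem bicliqueMatrix_mul_transpose_apply {m : ℕ} {f : Fin m → Finset V × Finset V}
    (hd : ∀ i, Disjoint (f i).1 (f i).2) (u w : V) :
    (bicliqueMatrix f * (bicliqueMatrix (Prod.swap ∘ f))ᵀ) u w = coversCount f u w := by
  rw [coversCount_eq_add hd, bicliqueMatrix, bicliqueMatrix, transpose_fromCols,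
    fromCols_mul_fromRows]
  simp [indicatorMatrix, mul_apply, ← ite_and, and_comm, Finset.sum_boole]

theorem IsOddCover.adjMatrix_eq {G : SimpleGraph V} [DecidableRel G.Adj] {m : ℕ}
    {f : Fin m → Finset V × Finset V} (hf : IsOddCover G f) :
    G.adjMatrix (ZMod 2) = bicliqueMatrix f * (bicliqueMatrix (Prod.swap ∘ f))ᵀ := by
  ext u w
  rw [bicliqueMatrix_mul_transpose_apply hf.1, SimpleGraph.adjMatrix_apply]
  obtain rfl | huw := eq_or_ne u w
  · have hX (i) : ¬(u ∈ (f i).1 ∧ u ∈ (f i).2) := fun h =>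
      Finset.disjoint_left.1 (hf.1 i) h.1 h.2
    have hY (i) : ¬(u ∈ (f i).2 ∧ u ∈ (f i).1) := fun h => hX i h.symm
    simp [coversCount_eq_add hf.1, hX, hY]
  · by_cases hadj : G.Adj u w
    · rw [if_pos hadj, ZMod.natCast_eq_one_iff_odd.2 ((hf.2 u w huw).1 hadj)]
    · rw [if_neg hadj, ZMod.natCast_eq_zero_iff_even.2]
      exact Nat.not_odd_iff_even.1 (mt (hf.2 u w huw).2 hadj)

end OddCover

section PerfectOddCover

variable {V : Type*} [Fintype V] [DecidableEq V] {m : ℕ} {f : Fin m → Finset V × Finset V}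

theorem IsOddCover.odd_card_fst_and_snd (hf : IsOddCover (⊤ : SimpleGraph V) f)
    (hV : Fintype.card V = 2 * m) (i : Fin m) : Odd #(f i).1 ∧ Odd #(f i).2 := by
  set M := bicliqueMatrix f
  set N := bicliqueMatrix (Prod.swap ∘ f)
  have hA := hf.adjMatrix_eq
  have e : V ≃ Fin m ⊕ Fin m := Fintype.equivOfCardEq (by simp; omega)
  have hsq : Nᵀ * M * (Nᵀ * M) = 1 := mul_mul_mul_eq_one_of_equiv e <| by
    rw [← hA]; exact SimpleGraph.adjMatrix_top_mul_self_of_even ⟨m, by omega⟩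
  have h : (fun v => indicatorMatrix (fun i => (f i).2) v i) ⬝ᵥ
      ((⊤ : SimpleGraph V).adjMatrix (ZMod 2) *ᵥ fun v => indicatorMatrix (fun i => (f i).1) v i)
        = 1 := by
    have := congrFun (congrFun hsq (.inl i)) (.inl i)
    rwa [Matrix.mul_assoc, ← Matrix.mul_assoc M, ← hA, one_apply_eq] at this
  rw [SimpleGraph.dotProduct_adjMatrix_top_mulVec, dotProduct_indicatorMatrix_col,
    Finset.disjoint_iff_inter_eq_empty.1 (hf.1 i).symm] at h
  simp only [sum_indicatorMatrix_col, Finset.card_empty, Nat.cast_zero, sub_zero, ← Nat.cast_mul,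
    ZMod.natCast_eq_one_iff_odd, Nat.odd_mul] at h
  exact h.symm

theorem IsOddCover.odd_card_filter_mem_union (hf : IsOddCover (⊤ : SimpleGraph V) f)
    (hV : Fintype.card V = 2 * m) (v : V) : Odd #{i | v ∈ (f i).1 ∪ (f i).2} := by
  have hcols : (bicliqueMatrix (Prod.swap ∘ f))ᵀ *ᵥ 1 = 1 := by
    ext (i | i)
    · simp only [mulVec, dotProduct_one, transpose_apply, sum_bicliqueMatrix_col_inl,
        Function.comp_apply, Prod.fst_swap, Pi.one_apply, ZMod.natCast_eq_one_iff_odd]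
      exact (hf.odd_card_fst_and_snd hV i).2
    · simp only [mulVec, dotProduct_one, transpose_apply, sum_bicliqueMatrix_col_inr,
        Function.comp_apply, Prod.snd_swap, Pi.one_apply, ZMod.natCast_eq_one_iff_odd]
      exact (hf.odd_card_fst_and_snd hV i).1
  have hrows : bicliqueMatrix f *ᵥ 1 = 1 := by
    rw [← hcols, mulVec_mulVec, ← hf.adjMatrix_eq,
      SimpleGraph.adjMatrix_top_mulVec_one_of_even ⟨m, by omega⟩]
  have := congrFun hrows v
  rwa [mulVec, dotProduct_one, sum_bicliqueMatrix_row hf.1, Pi.one_apply,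
    ZMod.natCast_eq_one_iff_odd] at this

end PerfectOddCover

theorem stmt17_general (k : ℕ)
    (f : Fin k → Finset (Fin (2 * k)) × Finset (Fin (2 * k)))
    (hf : IsOddCover (⊤ : SimpleGraph (Fin (2 * k))) f) :
    ∀ v : Fin (2 * k),
      Odd ((Finset.univ.filter (fun i : Fin k => v ∈ (f i).1 ∪ (f i).2)).card) :=
  hf.odd_card_filter_mem_union (Fintype.card_fin _)

/-- In a perfect odd cover `(X₁,Y₁),…,(X_k,Y_k)` of `K_{2k}`, setting
`Uᵢ = Xᵢ ∪ Yᵢ`, every vertex is contained in an odd number of the sets `Uᵢ`. -/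
theorem stmt17 (k : ℕ) (hk : 1 ≤ k)
    (f : Fin k → Finset (Fin (2 * k)) × Finset (Fin (2 * k)))
    (hf : IsOddCover (⊤ : SimpleGraph (Fin (2 * k))) f) :
    ∀ v : Fin (2 * k),
      Odd ((Finset.univ.filter (fun i : Fin k => v ∈ (f i).1 ∪ (f i).2)).card) :=
  stmt17_general k f hf
end

section
/- Let k ≥ 0 be an integer and let 2n = 8k + 4 or 2n = 8k + 6, and let v_1, …, v_{2n} be the vertices of the complete graph K_{2n}. Then there is no perfect odd cover of K_{2n}, given by n bicliques with partite-set pairs (X_1, Y_1), …, (X_n, Y_n), such that for every 1 ≤ i ≤ n the vertices v_{2i−1} and v_{2i} are of the same type, i.e., for every 1 ≤ j ≤ n, v_{2i−1} ∈ X_j ∪ Y_j if and only if v_{2i} ∈ X_j ∪ Y_j. -/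
open Finset

/-!
Encode subsets `U` of the vertex set by their indicator vectors `u ∈ 𝔽₂^V`. An odd cover
`(X_j, Y_j)_{j < m}` of the complete graph gives the quadratic form
`Q u = ∑_j ⟨1_{X_j}, u⟩ ⟨1_{Y_j}, u⟩`, which counts mod 2, with multiplicity, the biclique
edges inside `U`, and hence equals `binom |U| 2` mod 2. Its Gauss sum `∑_u (-1)^{Q u}` is
therefore the weight enumerator `∑_w binom N w (-1)^{binom w 2} = Re (1+i)^N + Im (1+i)^N`,
which is `-2^n` when `N = 2n` with `n ≡ 2, 3 (mod 4)`.

On the other hand, for a form `Q = ∑_{j < n} a_j b_j` on a space of size `4^n` the Gauss sum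
cannot be `-2^n`: squaring it gives `|W|` times the Gauss sum of `Q` over the radical of its polar
form, so `G = -2^n` forces the radical to be `0`; then `u ↦ (a_j u, b_j u)_j` is an isomorphism
onto `(𝔽₂²)^n`, transporting `Q` to the hyperbolic form `∑ x_j y_j`, whose Gauss sum is `+2^n`.
-/

open QuadraticMap

def signChar : AddChar (ZMod 2) ℤ where
  toFun a := (-1) ^ a.val
  map_zero_eq_one' := rfl
  map_add_eq_mul' := by decide

lemma signChar_eq_one_iff (a : ZMod 2) : signChar a = 1 ↔ a = 0 := by
  revert a; decide

lemma signChar_mul_self (a : ZMod 2) : signChar a * signChar a = 1 := by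
  rw [← AddChar.map_add_eq_mul, CharTwo.add_self_eq_zero, AddChar.map_zero_eq_one]

lemma signChar_natCast (k : ℕ) : signChar k = (-1) ^ k := by
  change (-1 : ℤ) ^ (k : ZMod 2).val = _
  rw [ZMod.val_natCast, ← neg_one_pow_eq_pow_mod_two]

lemma AddChar.map_sum_eq_prod {A M ι : Type*} [AddCommMonoid A] [CommMonoid M]
    (ψ : AddChar A M) (s : Finset ι) (g : ι → A) : ψ (∑ i ∈ s, g i) = ∏ i ∈ s, ψ (g i) := by
  induction s using Finset.cons_induction with
  | empty => simp
  | cons i s hi ih => rw [sum_cons, prod_cons, AddChar.map_add_eq_mul, ih]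

open Classical in
lemma sum_signChar_addMonoidHom {A : Type*} [AddCommGroup A] [Fintype A] (φ : A →+ ZMod 2) :
    ∑ a, signChar (φ a) = if φ = 0 then (Fintype.card A : ℤ) else 0 := by
  have hcomp : signChar.compAddMonoidHom φ = 0 ↔ φ = 0 := by
    simp [DFunLike.ext_iff, signChar_eq_one_iff]
  simpa [hcomp] using AddChar.sum_eq_ite (signChar.compAddMonoidHom φ)

namespace QuadraticMap

variable {W : Type*} [AddCommGroup W] [Module (ZMod 2) W]

lemma map_add_of_mem_ker_polarBilin (Q : QuadraticForm (ZMod 2) W) {w w' : W}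
    (hw : w ∈ LinearMap.ker Q.polarBilin) : Q (w + w') = Q w + Q w' := by
  have h : polar Q w w' = 0 := by
    rw [← polarBilin_apply_apply, LinearMap.mem_ker.mp hw, LinearMap.zero_apply]
  rwa [polar, sub_sub, sub_eq_zero] at h

variable [Fintype W]

def gaussSum (Q : QuadraticForm (ZMod 2) W) : ℤ := ∑ u, signChar (Q u)

open Classical in
lemma gaussSum_sq (Q : QuadraticForm (ZMod 2) W) :
    Q.gaussSum ^ 2 = Fintype.card W * ∑ w : LinearMap.ker Q.polarBilin, signChar (Q w) := by
  have hshift (u w : W) : signChar (Q u) * signChar (Q (u + w))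
      = signChar (Q w) * signChar (Q.polarBilin w u) := by
    rw [polarBilin_apply_apply, polar_comm, polar, sub_sub, sub_eq_add_neg,
      ZModModule.neg_eq_self, add_comm (Q u)]
    simp only [AddChar.map_add_eq_mul]
    linear_combination (-(signChar (Q u) * signChar (Q (u + w)))) * signChar_mul_self (Q w)
  calc Q.gaussSum ^ 2 = ∑ u, ∑ w, signChar (Q u) * signChar (Q (u + w)) := by
        rw [gaussSum, pow_two, sum_mul_sum]
        exact Fintype.sum_congr _ _ fun u =>
          (Fintype.sum_equiv (Equiv.addLeft u) _ _ fun w => rfl).symm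
    _ = ∑ w, signChar (Q w) * ∑ u, signChar ((Q.polarBilin w).toAddMonoidHom u) := by
        simp_rw [hshift, mul_sum]
        exact sum_comm
    _ = Fintype.card W * ∑ w : LinearMap.ker Q.polarBilin, signChar (Q w) := by
        simp_rw [sum_signChar_addMonoidHom]
        rw [← sum_subtype (univ.filter (· ∈ LinearMap.ker Q.polarBilin)) (by simp)
          (fun w => signChar (Q w)), mul_sum, sum_filter]
        refine Fintype.sum_congr _ _ fun w => ?_
        have hker : (Q.polarBilin w).toAddMonoidHom = 0 ↔ w ∈ LinearMap.ker Q.polarBilin := by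
          rw [LinearMap.mem_ker, ← LinearMap.toAddMonoidHom_injective.eq_iff]
          rfl
        simp only [hker, ite_mul, zero_mul, mul_comm]

open Classical in
lemma sum_ker_polarBilin_eq_zero_or_card (Q : QuadraticForm (ZMod 2) W) :
    ∑ w : LinearMap.ker Q.polarBilin, signChar (Q w) = 0 ∨
      ∑ w : LinearMap.ker Q.polarBilin, signChar (Q w) =
        Fintype.card (LinearMap.ker Q.polarBilin) := by
  let φ : LinearMap.ker Q.polarBilin →+ ZMod 2 :=
    { toFun w := Q w
      map_zero' := Q.map_zero
      map_add' w w' := map_add_of_mem_ker_polarBilin Q w.2 }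
  have h := sum_signChar_addMonoidHom φ
  split_ifs at h
  · exact Or.inr h
  · exact Or.inl h

lemma ker_polarBilin_eq_bot_of_gaussSum_sq (Q : QuadraticForm (ZMod 2) W)
    (hG : Q.gaussSum ^ 2 = Fintype.card W) : LinearMap.ker Q.polarBilin = ⊥ := by
  classical
  have hrad : ∑ w : LinearMap.ker Q.polarBilin, signChar (Q w) = 1 := by
    have h := gaussSum_sq Q
    rw [hG] at h
    exact (mul_eq_left₀ (Nat.cast_ne_zero.2 Fintype.card_ne_zero)).mp h.symm
  have hcard : Fintype.card (LinearMap.ker Q.polarBilin) = 1 := by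
    have h := (sum_ker_polarBilin_eq_zero_or_card Q).resolve_left (by rw [hrad]; norm_num)
    rw [hrad] at h
    exact_mod_cast h.symm
  refine (Submodule.eq_bot_iff _).2 fun w hw => ?_
  exact congrArg Subtype.val (Fintype.card_le_one_iff.mp hcard.le ⟨w, hw⟩ 0)

lemma gaussSum_sum_linMulLin_ne {n : ℕ} (a b : Fin n → W →ₗ[ZMod 2] ZMod 2)
    (hW : Fintype.card W = 4 ^ n) :
    (∑ j, linMulLin (a j) (b j)).gaussSum ≠ -2 ^ n := by
  set Q := ∑ j, linMulLin (a j) (b j)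
  intro hG
  let Φ : W →ₗ[ZMod 2] Fin n → ZMod 2 × ZMod 2 := LinearMap.pi fun j => (a j).prod (b j)
  have hQ (u : W) : Q u = ∑ j, (Φ u j).1 * (Φ u j).2 := by simp [Q, Φ]
  have hrad : LinearMap.ker Q.polarBilin = ⊥ := by
    refine ker_polarBilin_eq_bot_of_gaussSum_sq Q ?_
    rw [hG, hW, neg_sq, ← pow_mul, mul_comm, pow_mul]
    norm_num
  have hinj : Function.Injective Φ := by
    rw [← LinearMap.ker_eq_bot, eq_bot_iff, ← hrad]
    intro w (hw : Φ w = 0)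
    rw [LinearMap.mem_ker]
    ext u
    simp [polar, hQ, hw]
  have hbij : Function.Bijective Φ := by
    rw [Fintype.bijective_iff_injective_and_card]
    exact ⟨hinj, by simp [hW]⟩
  have hG' : Q.gaussSum = 2 ^ n := by
    rw [gaussSum, Fintype.sum_bijective Φ hbij _
      (fun z => signChar (∑ j, (z j).1 * (z j).2)) fun u => by rw [hQ]]
    simp_rw [AddChar.map_sum_eq_prod]
    have h2 : ∑ x : ZMod 2 × ZMod 2, signChar (x.1 * x.2) = 2 := by decide
    rw [← h2, Fintype.sum_pow (fun x : ZMod 2 × ZMod 2 => signChar (x.1 * x.2))]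
  have : (0 : ℤ) < 2 ^ n := by positivity
  linarith

end QuadraticMap

section WeightEnumerator

open Complex

lemma neg_one_pow_choose_two (w : ℕ) :
    ((-1) ^ w.choose 2 : ℝ) = (I ^ w).re + (I ^ w).im := by
  induction w using Nat.strong_induction_on with
  | _ w ih =>
    obtain hw | ⟨m, rfl⟩ : w < 4 ∨ ∃ m, w = m + 4 := by
      by_cases hw : w < 4
      · exact Or.inl hw
      · exact Or.inr ⟨w - 4, by omega⟩
    · interval_cases w <;> norm_num [Nat.choose, pow_succ]
    · have h : (m + 4).choose 2 = m.choose 2 + 2 * (2 * m + 3) := by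
        simp [Nat.choose_succ_succ']
        ring
      rw [h, pow_add, pow_mul, neg_one_sq, one_pow, mul_one, ih m (by omega), pow_add,
        I_pow_four, mul_one]

lemma sum_choose_mul_signChar (N : ℕ) :
    ((∑ w ∈ range (N + 1), N.choose w * signChar (w.choose 2 : ZMod 2) : ℤ) : ℝ)
      = ((1 + I) ^ N).re + ((1 + I) ^ N).im := by
  rw [add_comm 1 I, add_pow]
  simp [re_sum, im_sum, signChar_natCast, neg_one_pow_choose_two, sum_add_distrib, add_mul,
    mul_comm]

lemma re_add_im_one_add_I_pow (n : ℕ) (hn : n % 4 = 2 ∨ n % 4 = 3) :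
    ((1 + I) ^ (2 * n)).re + ((1 + I) ^ (2 * n)).im = -2 ^ n := by
  have h : (1 + I) ^ (2 * n) = ((2 ^ n : ℝ) : ℂ) * I ^ (n % 4) := by
    rw [pow_mul, ← I_pow_eq_pow_mod, ofReal_pow, ← mul_pow]
    congr 1
    ring_nf
    simp
  rw [h, re_ofReal_mul, im_ofReal_mul]
  rcases hn with hn | hn <;> simp [hn, I_pow_three]

end WeightEnumerator

section OddCover

variable {V : Type*} [DecidableEq V]

def coordSum (s : Finset V) : (V → ZMod 2) →ₗ[ZMod 2] ZMod 2 := ∑ p ∈ s, LinearMap.proj p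

@[simp]
lemma coordSum_single (s : Finset V) (p : V) :
    coordSum s (Pi.single p 1) = if p ∈ s then 1 else 0 := by
  simp [coordSum, Finset.sum_pi_single']

def coverForm {m : ℕ} (f : Fin m → Finset V × Finset V) : QuadraticForm (ZMod 2) (V → ZMod 2) :=
  ∑ j, linMulLin (coordSum (f j).1) (coordSum (f j).2)

variable {m : ℕ} {f : Fin m → Finset V × Finset V}

lemma coverForm_single (hf : ∀ j, Disjoint (f j).1 (f j).2) (p : V) :
    coverForm f (Pi.single p 1) = 0 := by
  simp only [coverForm, _root_.sum_apply, linMulLin_apply, coordSum_single]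
  refine sum_eq_zero fun j _ => ?_
  have : p ∈ (f j).1 → p ∉ (f j).2 := fun h => disjoint_left.mp (hf j) h
  split_ifs <;> simp_all

lemma polar_coverForm_single (hf : ∀ j, Disjoint (f j).1 (f j).2) (p q : V) :
    polar (coverForm f) (Pi.single p 1) (Pi.single q 1) = coversCount f p q := by
  rw [coversCount, Nat.card_eq_fintype_card, Fintype.card_subtype, natCast_card_filter]
  simp only [polar, coverForm, _root_.sum_apply, linMulLin_apply, map_add, coordSum_single,
    ← sum_sub_distrib]
  refine sum_congr rfl fun j _ => ?_
  have hp : p ∈ (f j).1 → p ∉ (f j).2 := fun h => disjoint_left.mp (hf j) h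
  have hq : q ∈ (f j).1 → q ∉ (f j).2 := fun h => disjoint_left.mp (hf j) h
  split_ifs <;> simp_all

lemma apply_sum_single_eq_choose_two (Q : QuadraticForm (ZMod 2) (V → ZMod 2))
    (h0 : ∀ p, Q (Pi.single p 1) = 0)
    (h1 : ∀ p q, p ≠ q → polar Q (Pi.single p 1) (Pi.single q 1) = 1) (U : Finset V) :
    Q (∑ p ∈ U, Pi.single p 1) = ((#U).choose 2 : ℕ) := by
  induction U using Finset.induction_on with
  | empty => simp
  | insert p U hp ih =>
    have hpolar : polar Q (Pi.single p 1) (∑ q ∈ U, Pi.single q 1) = #U := by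
      rw [← polarBilin_apply_apply, map_sum]
      simp only [polarBilin_apply_apply]
      rw [sum_congr rfl fun q hq => h1 p q (ne_of_mem_of_not_mem hq hp).symm]
      simp
    have hadd (x y : V → ZMod 2) : Q (x + y) = Q x + Q y + polar Q x y := by rw [polar]; ring
    rw [sum_insert hp, hadd, h0, ih, hpolar, card_insert_of_notMem hp, Nat.choose_succ_succ',
      Nat.choose_one_right]
    push_cast
    ring

lemma sum_single_injective :
    Function.Injective fun U : Finset V => ∑ p ∈ U, (Pi.single p 1 : V → ZMod 2) := by
  intro U U' h
  ext q
  have hq := congrFun h q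
  simp only [Finset.sum_apply, Finset.sum_pi_single] at hq
  split_ifs at hq <;> simp_all

variable [Fintype V]

lemma gaussSum_eq_sum_choose (Q : QuadraticForm (ZMod 2) (V → ZMod 2))
    (h0 : ∀ p, Q (Pi.single p 1) = 0)
    (h1 : ∀ p q, p ≠ q → polar Q (Pi.single p 1) (Pi.single q 1) = 1) :
    Q.gaussSum = ∑ w ∈ range (Fintype.card V + 1),
      (Fintype.card V).choose w * signChar (w.choose 2 : ZMod 2) := by
  have hbij : Function.Bijective fun U : Finset V => ∑ p ∈ U, (Pi.single p 1 : V → ZMod 2) := by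
    rw [Fintype.bijective_iff_injective_and_card]
    exact ⟨sum_single_injective, by simp⟩
  rw [QuadraticMap.gaussSum,
    ← Fintype.sum_bijective _ hbij (fun U => signChar (Q (∑ p ∈ U, Pi.single p 1))) _ fun _ => rfl]
  simp_rw [apply_sum_single_eq_choose_two Q h0 h1]
  rw [← powerset_univ, sum_powerset_apply_card (fun w => signChar (w.choose 2 : ZMod 2)),
    card_univ]
  simp

theorem not_isOddCover_top_of_card_eq (n : ℕ) (hn : n % 4 = 2 ∨ n % 4 = 3)
    (hV : Fintype.card V = 2 * n) (f : Fin n → Finset V × Finset V) :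
    ¬ IsOddCover (⊤ : SimpleGraph V) f := by
  rintro ⟨hdisj, hodd⟩
  have h1 (p q : V) (hpq : p ≠ q) : polar (coverForm f) (Pi.single p 1) (Pi.single q 1) = 1 := by
    rw [polar_coverForm_single hdisj, ZMod.natCast_eq_one_iff_odd]
    exact (hodd p q hpq).mp hpq
  have hG : ((coverForm f).gaussSum : ℝ) = -2 ^ n := by
    rw [gaussSum_eq_sum_choose _ (coverForm_single hdisj) h1, sum_choose_mul_signChar, hV,
      re_add_im_one_add_I_pow n hn]
  have hcard : Fintype.card (V → ZMod 2) = 4 ^ n := by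
    rw [Fintype.card_fun, ZMod.card, hV, pow_mul]
    norm_num
  exact gaussSum_sum_linMulLin_ne (fun j => coordSum (f j).1) (fun j => coordSum (f j).2) hcard
    (by exact_mod_cast hG)

end OddCover

/-- For `2n = 8k + 4` or `2n = 8k + 6`, with the vertices of `K_{2n}` paired
up as `(v_{2i-1}, v_{2i})` (here the pair `(2i, 2i+1)` for `i : Fin n`), there is no perfect
odd cover of `K_{2n}` in which the two vertices of each pair are of the same type, i.e. each
pair meets exactly the same bicliques. -/
theorem stmt19 (k n : ℕ) (h : 2 * n = 8 * k + 4 ∨ 2 * n = 8 * k + 6)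
    (f : Fin n → Finset (Fin (2 * n)) × Finset (Fin (2 * n))) :
    ¬ IsOddCover (⊤ : SimpleGraph (Fin (2 * n))) f :=
  not_isOddCover_top_of_card_eq n (by omega) (Fintype.card_fin _) f
end
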